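/- arXiv:2002.00080 — 9 statements merged into one kernel-verified Lean document; each statement's English description precedes it below -/
import Mathlib

section
/- Let A be an n×n complex matrix, γ a real number, and θ a real number. Define the 2n×2n matrices R_γ = [[2γI, −A*],[I, 0]] and S = [[A, 0],[0, I]] (in 2×2 block form, where A* is the conjugate transpose of A and I is the n×n identity), and let H(θ) = (e^{iθ}A + e^{−iθ}A*)/2. Then e^{iθ} is an eigenvalue of the pencil R_γ − λS or the pencil is singular (i.e., det(R_γ − λS) = 0 for every λ ∈ ℂ) if and only if γ is an eigenvalue of the Hermitian matrix H(θ); equivalently, det(R_γ − e^{iθ}S) = 0 or (∀ λ ∈ ℂ, det(R_γ − λS) = 0) holds if and only if det(H(θ) − γI) = 0. -/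
open Matrix

/-- He–Watson / Mengi–Overton level-set test.
`e^{iθ}` is an eigenvalue of the pencil `R_γ - λ S` or the pencil is singular
iff `γ` is an eigenvalue of the Hermitian matrix `H(θ)`. -/
theorem levelset_test (n : ℕ) (A : Matrix (Fin n) (Fin n) ℂ) (γ θ : ℝ)
    (H : Matrix (Fin n) (Fin n) ℂ)
    (hH : H = (2⁻¹ : ℂ) •
      (Complex.exp ((θ : ℂ) * Complex.I) • A + Complex.exp (-(θ : ℂ) * Complex.I) • Aᴴ))
    (R : Matrix (Fin n ⊕ Fin n) (Fin n ⊕ Fin n) ℂ)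
    (hR : R = Matrix.fromBlocks (((2 * γ : ℝ) : ℂ) • 1) (-Aᴴ) 1 0)
    (S : Matrix (Fin n ⊕ Fin n) (Fin n ⊕ Fin n) ℂ)
    (hS : S = Matrix.fromBlocks A 0 0 1) :
    ((R - Complex.exp ((θ : ℂ) * Complex.I) • S).det = 0 ∨ ∀ z : ℂ, (R - z • S).det = 0)
      ↔ (H - (γ : ℂ) • 1).det = 0 := by
  set e : ℂ := Complex.exp ((θ : ℂ) * Complex.I) with he_def
  have he : e ≠ 0 := Complex.exp_ne_zero _
  have hinv : Complex.exp (-(θ : ℂ) * Complex.I) = e⁻¹ := by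
    rw [he_def, neg_mul, Complex.exp_neg]
  -- key determinant identity
  have key : (R - e • S).det = (2 * e) ^ n * (H - (γ : ℂ) • 1).det := by
    have hblock : R - e • S =
        Matrix.fromBlocks ((((2 * γ : ℝ) : ℂ)) • 1 - e • A) (-Aᴴ) 1 (-(e • 1)) := by
      subst hR hS
      ext i j
      rcases i <;> rcases j <;> simp [Matrix.sub_apply, Matrix.smul_apply]
    rw [hblock]
    haveI : Invertible (-(e • (1 : Matrix (Fin n) (Fin n) ℂ))) :=
      ⟨-(e⁻¹ • 1), by
        simp [Matrix.neg_mul, Matrix.mul_neg, Matrix.smul_mul, Matrix.mul_smul,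
          smul_smul, inv_mul_cancel₀ he, mul_inv_cancel₀ he], by
        simp [Matrix.neg_mul, Matrix.mul_neg, Matrix.smul_mul, Matrix.mul_smul,
          smul_smul, inv_mul_cancel₀ he, mul_inv_cancel₀ he]⟩
    rw [Matrix.det_fromBlocks₂₂]
    have hInvOf : ⅟(-(e • (1 : Matrix (Fin n) (Fin n) ℂ))) = -(e⁻¹ • 1) :=
      invOf_eq_right_inv (by
        simp [Matrix.neg_mul, Matrix.mul_neg, Matrix.smul_mul, Matrix.mul_smul,
          smul_smul, inv_mul_cancel₀ he, mul_inv_cancel₀ he])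
    rw [hInvOf]
    have hmat : (((2 * γ : ℝ) : ℂ)) • 1 - e • A - -Aᴴ * -(e⁻¹ • (1 : Matrix (Fin n) (Fin n) ℂ)) * 1
        = (-2 : ℂ) • (H - (γ : ℂ) • 1) := by
      subst hH
      rw [hinv]
      ext i j
      simp [Matrix.sub_apply, Matrix.add_apply, Matrix.smul_apply, Matrix.mul_apply,
        Matrix.one_apply, Finset.mul_sum]
      by_cases h : i = j <;> simp [h] <;> ring
    rw [hmat, Matrix.det_smul, Matrix.det_neg, Matrix.det_smul, Matrix.det_one,
      Fintype.card_fin]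
    have hpow : ((-2 : ℂ)) ^ n * (-1 : ℂ) ^ n = 2 ^ n := by
      rw [← mul_pow]; norm_num
    linear_combination (e ^ n * (H - (γ : ℂ) • 1).det) * hpow
  have hne : (2 * e) ^ n ≠ 0 := pow_ne_zero _ (mul_ne_zero two_ne_zero he)
  constructor
  · rintro (h | h)
    · rw [key] at h
      exact (mul_eq_zero.mp h).resolve_left hne
    · have h' := h e
      rw [key] at h'
      exact (mul_eq_zero.mp h').resolve_left hne
  · intro h
    left
    rw [key, h, mul_zero]
end

section
/- Let A be an n×n complex matrix, γ ≥ 0 a real number, and θ ∈ [0, π). If the spectral radius of H(θ) equals γ, then there exists λ ∈ ℂ with |λ| = 1 such that det(R_γ − λS) = 0 and θ = f(Arg(λ)), where Arg(λ) ∈ (−π, π] is the principal argument and f : (−π, π] → [0, π) is defined by f(θ) = θ + π if θ < 0, f(θ) = 0 if θ = 0 or θ = π, and f(θ) = θ otherwise. -/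
/-!
With `λ = e^{iθ}`, a block column operation on `R_γ - λS` gives
`det(R_γ - λS) = (-λ)ⁿ (-2)ⁿ det(H(θ) - γ)`, so the eigenvalue `γ` of `H(θ)` produces the root
`λ`. Since `H(θ + π) = -H(θ)`, the eigenvalue `-γ` produces the root `-λ` instead, and `f`
undoes that shift of the argument by `π`.
-/

open Matrix

/-- The remapping `f : (-π, π] → [0, π)` from equation (2.11) of the paper. -/
noncomputable def remap (x : ℝ) : ℝ :=
  if x < 0 then x + Real.pi else if x = 0 ∨ x = Real.pi then 0 else x

section Pencil

variable {n K : Type*} [Fintype n] [DecidableEq n] [Field K]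

theorem det_fromBlocks_sub_smul_fromBlocks (a : K) {z : K} (hz : z ≠ 0) (A B : Matrix n n K) :
    (fromBlocks (a • 1) (-B) 1 0 - z • fromBlocks A 0 0 1).det
      = (-z) ^ Fintype.card n * (a • 1 - z • A - z⁻¹ • B).det := by
  have hfactor : (fromBlocks (a • 1) (-B) 1 0 - z • fromBlocks A 0 0 1) *
      fromBlocks 1 0 (z⁻¹ • 1) (1 : Matrix n n K) =
        fromBlocks (a • 1 - z • A - z⁻¹ • B) (-B) 0 ((-z) • 1) := by
    rw [fromBlocks_smul, sub_eq_add_neg, fromBlocks_neg, fromBlocks_add, fromBlocks_multiply]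
    congr 1 <;> simp [smul_smul, hz, sub_eq_add_neg]
  have hdet := congrArg det hfactor
  rwa [det_mul, det_fromBlocks_zero₁₂, det_fromBlocks_zero₂₁, det_one, mul_one, mul_one,
    det_smul, det_one, mul_one, mul_comm] at hdet

theorem det_fromBlocks_sub_smul_fromBlocks_eq_zero [NeZero (2 : K)] {z : K} (hz : z ≠ 0)
    {A B : Matrix n n K} {c : K} (hc : ((2⁻¹ : K) • (z • A + z⁻¹ • B) - c • 1).det = 0) :
    (fromBlocks ((2 * c) • 1) (-B) 1 0 - z • fromBlocks A 0 0 1).det = 0 := by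
  have hpencil : (2 * c) • 1 - z • A - z⁻¹ • B
      = (-2 : K) • ((2⁻¹ : K) • (z • A + z⁻¹ • B) - c • 1) := by
    rw [smul_sub, smul_smul, smul_smul, neg_mul, mul_inv_cancel₀ (NeZero.ne 2)]
    module
  rw [det_fromBlocks_sub_smul_fromBlocks _ hz, hpencil, det_smul, hc, mul_zero, mul_zero]

end Pencil

theorem Complex.arg_exp_ofReal_mul_I {x : ℝ} (hx : x ∈ Set.Ioc (-Real.pi) Real.pi) :
    Complex.arg (Complex.exp (x * Complex.I)) = x := by
  rw [Complex.exp_mul_I, Complex.arg_cos_add_sin_mul_I hx]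

theorem remap_arg_exp_mul_I {θ : ℝ} (h0 : 0 ≤ θ) (hπ : θ < Real.pi) :
    remap (Complex.arg (Complex.exp (θ * Complex.I))) = θ := by
  rw [Complex.arg_exp_ofReal_mul_I ⟨by linarith, hπ.le⟩, remap, if_neg h0.not_gt]
  split_ifs with h
  · exact (h.resolve_right hπ.ne).symm
  · rfl

theorem remap_arg_neg_exp_mul_I {θ : ℝ} (h0 : 0 ≤ θ) (hπ : θ < Real.pi) :
    remap (Complex.arg (-Complex.exp (θ * Complex.I))) = θ := by
  rcases h0.eq_or_lt with rfl | hpos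
  · simp [Complex.arg_neg_one, remap, Real.pi_pos.not_gt]
  · have him : 0 < (Complex.exp (θ * Complex.I)).im := by
      rw [Complex.exp_ofReal_mul_I_im]
      exact Real.sin_pos_of_pos_of_lt_pi hpos hπ
    rw [Complex.arg_neg_eq_arg_sub_pi_of_im_pos him,
      Complex.arg_exp_ofReal_mul_I ⟨by linarith, hπ.le⟩, remap, if_pos (by linarith)]
    ring

theorem levelset_remap_general (n : ℕ) (A : Matrix (Fin n) (Fin n) ℂ) (γ θ : ℝ)
    (hθ1 : 0 ≤ θ) (hθ2 : θ < Real.pi)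
    (H : Matrix (Fin n) (Fin n) ℂ)
    (hH : H = (2⁻¹ : ℂ) •
      (Complex.exp ((θ : ℂ) * Complex.I) • A + Complex.exp (-(θ : ℂ) * Complex.I) • Aᴴ))
    (R : Matrix (Fin n ⊕ Fin n) (Fin n ⊕ Fin n) ℂ)
    (hR : R = Matrix.fromBlocks (((2 * γ : ℝ) : ℂ) • 1) (-Aᴴ) 1 0)
    (S : Matrix (Fin n ⊕ Fin n) (Fin n ⊕ Fin n) ℂ)
    (hS : S = Matrix.fromBlocks A 0 0 1)
    -- `ρ(H(θ)) = γ` : some real eigenvalue of the Hermitian matrix `H(θ)` has absolute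
    -- value `γ`, and every real eigenvalue has absolute value at most `γ`.
    (hrad1 : ∃ c : ℝ, |c| = γ ∧ (H - (c : ℂ) • 1).det = 0) :
    ∃ z : ℂ, ‖z‖ = 1 ∧ (R - z • S).det = 0 ∧ θ = remap (Complex.arg z) := by
  obtain ⟨c, rfl, hc⟩ := hrad1
  set w := Complex.exp ((θ : ℂ) * Complex.I) with hw_def
  have hw : w ≠ 0 := Complex.exp_ne_zero _
  have hw_norm : ‖w‖ = 1 := Complex.norm_exp_ofReal_mul_I θ
  rw [neg_mul, Complex.exp_neg, ← hw_def] at hH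
  subst hH hR hS
  rcases abs_choice c with habs | habs <;> rw [habs] <;> push_cast
  · exact ⟨w, hw_norm, det_fromBlocks_sub_smul_fromBlocks_eq_zero hw hc,
      (remap_arg_exp_mul_I hθ1 hθ2).symm⟩
  · have hneg : (2⁻¹ : ℂ) • ((-w) • A + (-w)⁻¹ • Aᴴ) - (-(c : ℂ)) • 1
        = -((2⁻¹ : ℂ) • (w • A + w⁻¹ • Aᴴ) - (c : ℂ) • 1) := by
      rw [inv_neg]
      module
    refine ⟨-w, by rw [norm_neg, hw_norm], ?_, (remap_arg_neg_exp_mul_I hθ1 hθ2).symm⟩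
    refine det_fromBlocks_sub_smul_fromBlocks_eq_zero (neg_ne_zero.2 hw) ?_
    rw [hneg, det_neg, hc, mul_zero]

/-- Corollary 2.4. If the spectral radius of `H(θ)` equals `γ ≥ 0`,
then there is a unimodular `λ` with `det(R_γ - λ S) = 0` and `θ = f(Arg λ)`. -/
theorem levelset_remap (n : ℕ) (A : Matrix (Fin n) (Fin n) ℂ) (γ θ : ℝ)
    (hγ : 0 ≤ γ) (hθ1 : 0 ≤ θ) (hθ2 : θ < Real.pi)
    (H : Matrix (Fin n) (Fin n) ℂ)
    (hH : H = (2⁻¹ : ℂ) •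
      (Complex.exp ((θ : ℂ) * Complex.I) • A + Complex.exp (-(θ : ℂ) * Complex.I) • Aᴴ))
    (R : Matrix (Fin n ⊕ Fin n) (Fin n ⊕ Fin n) ℂ)
    (hR : R = Matrix.fromBlocks (((2 * γ : ℝ) : ℂ) • 1) (-Aᴴ) 1 0)
    (S : Matrix (Fin n ⊕ Fin n) (Fin n ⊕ Fin n) ℂ)
    (hS : S = Matrix.fromBlocks A 0 0 1)
    -- `ρ(H(θ)) = γ` : some real eigenvalue of the Hermitian matrix `H(θ)` has absolute
    -- value `γ`, and every real eigenvalue has absolute value at most `γ`.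
    (hrad1 : ∃ c : ℝ, |c| = γ ∧ (H - (c : ℂ) • 1).det = 0)
    (hrad2 : ∀ c : ℝ, (H - (c : ℂ) • 1).det = 0 → |c| ≤ γ) :
    ∃ z : ℂ, ‖z‖ = 1 ∧ (R - z • S).det = 0 ∧ θ = remap (Complex.arg z) :=
  levelset_remap_general n A γ θ hθ1 hθ2 H hH R hR S hS hrad1
end

section
/- Let r > 0 be a real number, j ≥ 3 an integer, and Θ a finite subset of [0, 2π) of cardinality k that contains all the angles 2πℓ/j for ℓ = 1, …, j (interpreted modulo 2π). Let G_Θ be the intersection over θ ∈ Θ of the half planes {z ∈ ℂ : Re(e^{iθ} z) ≤ r}. If sup{ |z| : z ∈ G_Θ } < r·sec(π/j), then k ≥ 2j. -/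
/-!
The regular angles `2πℓ/j` lie in `Θ`, so `G_Θ` is contained in the regular circumscribing
`j`-gon, whose corners have modulus `r·sec(π/j)`; hence that is an upper bound for `‖z‖` on
`G_Θ`. If `k < 2j`, fewer than `j` angles of `Θ` are not regular, so by pigeonhole one of the
`j` open arcs between consecutive regular angles contains no angle of `Θ`. The corner of the
regular `j`-gon in the direction of that arc then satisfies every constraint of `G_Θ`, and the
supremum equals `r·sec(π/j)`.
-/

open Real

def supportPolygon (Θ : Finset ℝ) (r : ℝ) : Set ℂ :=
  {z | ∀ θ ∈ Θ, (Complex.exp (θ * Complex.I) * z).re ≤ r}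

noncomputable def regularAngles (j : ℕ) : Finset ℝ :=
  (Finset.range j).image fun ℓ : ℕ => 2 * π / j * ℓ

lemma re_exp_mul_I_mul_polar (θ ψ a : ℝ) :
    (Complex.exp (θ * Complex.I) * (a * Complex.exp (ψ * Complex.I))).re = a * cos (θ + ψ) := by
  rw [mul_left_comm, ← Complex.exp_add, ← add_mul, ← Complex.ofReal_add, Complex.re_ofReal_mul,
    Complex.exp_ofReal_mul_I_re]

lemma re_exp_mul_I_mul (θ : ℝ) (z : ℂ) :
    (Complex.exp (θ * Complex.I) * z).re = ‖z‖ * cos (θ + z.arg) := by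
  conv_lhs => rw [← Complex.norm_mul_exp_arg_mul_I z]
  exact re_exp_mul_I_mul_polar _ _ _

lemma cos_le_cos_of_abs_le {b x : ℝ} (hb : b ≤ π) (h : |x| ≤ b) : cos b ≤ cos x := by
  rw [← cos_abs x]
  exact cos_le_cos_of_nonneg_of_le_pi (abs_nonneg x) hb h

lemma cos_le_cos_of_le_of_le_two_pi_sub {b x : ℝ} (hb : 0 ≤ b) (h₁ : b ≤ x)
    (h₂ : x ≤ 2 * π - b) : cos x ≤ cos b := by
  rcases le_total x π with hx | hx
  · exact cos_le_cos_of_nonneg_of_le_pi hb hx h₁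
  · rw [← cos_two_pi_sub x]
    exact cos_le_cos_of_nonneg_of_le_pi hb (by linarith) (by linarith)

lemma exists_int_abs_mul_add_le {δ : ℝ} (hδ : 0 < δ) (φ : ℝ) :
    ∃ q : ℤ, |δ * q + φ| ≤ δ / 2 := by
  refine ⟨round (-φ / δ), ?_⟩
  calc |δ * round (-φ / δ) + φ| = δ * |-φ / δ - round (-φ / δ)| := by
        rw [← abs_of_pos hδ, ← abs_mul, ← abs_neg, abs_of_pos hδ]
        congr 1
        field_simp
        ring
    _ ≤ δ * (1 / 2) := by gcongr; exact abs_sub_round _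
    _ = δ / 2 := by ring

lemma cos_two_pi_div_mul_emod_add {j : ℕ} (hj : j ≠ 0) (q : ℤ) (φ : ℝ) :
    cos (2 * π / j * ((q % j : ℤ) : ℝ) + φ) = cos (2 * π / j * q + φ) := by
  have h : 2 * π / j * ((q % j : ℤ) : ℝ) + φ = 2 * π / j * q + φ - ((q / j : ℤ) : ℝ) * (2 * π) := by
    rw [Int.emod_def]
    push_cast
    field_simp
    ring
  rw [h, cos_sub_int_mul_two_pi]

lemma exists_cos_pi_div_le_cos {j : ℕ} (hj : 0 < j) (φ : ℝ) :
    ∃ ℓ < j, cos (π / j) ≤ cos (2 * π / j * ℓ + φ) := by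
  obtain ⟨q, hq⟩ := exists_int_abs_mul_add_le (by positivity : 0 < 2 * π / j) φ
  obtain ⟨ℓ, hℓ⟩ := Int.eq_ofNat_of_zero_le (Int.emod_nonneg q (by omega : (j : ℤ) ≠ 0))
  have hℓj : ℓ < j := by
    have := Int.emod_lt_of_pos q (by omega : (0 : ℤ) < j)
    omega
  refine ⟨ℓ, hℓj, ?_⟩
  have hcast : (ℓ : ℝ) = ((q % j : ℤ) : ℝ) := by exact_mod_cast hℓ.symm
  rw [hcast, cos_two_pi_div_mul_emod_add hj.ne' q φ]
  refine cos_le_cos_of_abs_le (div_le_self pi_pos.le (by exact_mod_cast hj)) ?_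
  convert hq using 1
  ring

lemma norm_mul_cos_le_of_mem_supportPolygon {Θ : Finset ℝ} {r : ℝ} {j : ℕ} (hj : 0 < j)
    (hΘ : regularAngles j ⊆ Θ) {z : ℂ} (hz : z ∈ supportPolygon Θ r) :
    ‖z‖ * cos (π / j) ≤ r := by
  obtain ⟨ℓ, hℓ, hcos⟩ := exists_cos_pi_div_le_cos hj z.arg
  calc ‖z‖ * cos (π / j) ≤ ‖z‖ * cos (2 * π / j * ℓ + z.arg) := by gcongr
    _ = (Complex.exp ((2 * π / j * ℓ : ℝ) * Complex.I) * z).re := (re_exp_mul_I_mul _ z).symm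
    _ ≤ r := hz _ (hΘ (Finset.mem_image_of_mem _ (Finset.mem_range.2 hℓ)))

lemma exists_mem_supportPolygon_norm_eq_div_cos {Θ : Finset ℝ} {r α b : ℝ} (hr : 0 ≤ r)
    (hb : 0 ≤ b) (hcos : 0 < cos b) (hΘ : ∀ θ ∈ Θ, θ ∈ Set.Ico 0 (2 * π)) (hα : 0 ≤ α)
    (hαb : α + 2 * b ≤ 2 * π) (hfree : ∀ θ ∈ Θ, θ ∉ Set.Ioo α (α + 2 * b)) :
    ∃ w ∈ supportPolygon Θ r, ‖w‖ = r / cos b := by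
  refine ⟨((r / cos b : ℝ) : ℂ) * Complex.exp ((-(α + b) : ℝ) * Complex.I), ?_, ?_⟩
  · intro θ hθ
    obtain ⟨hθ₀, hθ₂⟩ := hΘ θ hθ
    rw [re_exp_mul_I_mul_polar]
    have hle : cos (θ + -(α + b)) ≤ cos b := by
      rcases le_or_gt θ α with hθα | hαθ
      · rw [← cos_neg]
        exact cos_le_cos_of_le_of_le_two_pi_sub hb (by linarith) (by linarith)
      · have : α + 2 * b ≤ θ := not_lt.1 fun h => hfree θ hθ ⟨hαθ, h⟩
        exact cos_le_cos_of_le_of_le_two_pi_sub hb (by linarith) (by linarith)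
    calc r / cos b * cos (θ + -(α + b)) ≤ r / cos b * cos b := by gcongr
      _ = r := div_mul_cancel₀ r hcos.ne'
  · rw [norm_mul, Complex.norm_exp_ofReal_mul_I, Complex.norm_real,
      Real.norm_of_nonneg (by positivity), mul_one]

lemma eq_of_eq_add_two_pi_mul_int {θ θ' : ℝ} (hθ : θ ∈ Set.Ico 0 (2 * π))
    (hθ' : θ' ∈ Set.Ico 0 (2 * π)) {m : ℤ} (h : θ = θ' + 2 * π * m) : θ = θ' := by
  rw [← zero_add (2 * π)] at hθ hθ'
  calc θ = toIcoMod two_pi_pos 0 θ := ((toIcoMod_eq_self _).2 hθ).symm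
    _ = toIcoMod two_pi_pos 0 θ' := by
      rw [h, show 2 * π * (m : ℝ) = m • (2 * π) by rw [zsmul_eq_mul]; ring, toIcoMod_add_zsmul]
    _ = θ' := (toIcoMod_eq_self _).2 hθ'

lemma two_pi_div_mul_add_two_mul_pi_div_le {j ℓ : ℕ} (hℓ : ℓ < j) :
    2 * π / j * ℓ + 2 * (π / j) ≤ 2 * π := by
  calc 2 * π / j * ℓ + 2 * (π / j) = 2 * π / j * (ℓ + 1) := by ring
    _ ≤ 2 * π / j * j := by gcongr; exact_mod_cast hℓ
    _ = 2 * π := by field_simp [(Nat.zero_le ℓ).trans_lt hℓ |>.ne']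

lemma two_pi_div_mul_mem_Ico {j ℓ : ℕ} (hℓ : ℓ < j) : 2 * π / j * ℓ ∈ Set.Ico 0 (2 * π) := by
  have hj : (0 : ℝ) < j := by exact_mod_cast (Nat.zero_le ℓ).trans_lt hℓ
  exact ⟨by positivity,
    (lt_add_of_pos_right _ (by positivity)).trans_le (two_pi_div_mul_add_two_mul_pi_div_le hℓ)⟩

lemma cos_pi_div_pos {j : ℕ} (hj : 2 < j) : 0 < cos (π / j) := by
  have hj' : (2 : ℝ) < j := by exact_mod_cast hj
  refine cos_pos_of_mem_Ioo ⟨?_, div_lt_div_of_pos_left pi_pos two_pos hj'⟩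
  linarith [pi_pos, div_pos pi_pos (two_pos.trans hj')]

lemma regularAngles_subset {Θ : Finset ℝ} {j : ℕ} (hj : 0 < j)
    (hΘ : ∀ θ ∈ Θ, θ ∈ Set.Ico 0 (2 * π))
    (hsub : ∀ ℓ ∈ Finset.Icc 1 j, ∃ θ ∈ Θ, ∃ m : ℤ, θ = 2 * π * ℓ / j + 2 * π * m) :
    regularAngles j ⊆ Θ := by
  intro x hx
  obtain ⟨ℓ, hℓ, rfl⟩ := Finset.mem_image.1 hx
  rw [Finset.mem_range] at hℓ
  rcases Nat.eq_zero_or_pos ℓ with rfl | hℓ₀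
  · obtain ⟨θ, hθ, m, hm⟩ := hsub j (Finset.mem_Icc.2 ⟨hj, le_rfl⟩)
    have hθ₀ : θ = 0 + 2 * π * (m + 1 : ℤ) := by
      rw [hm]
      push_cast
      field_simp
      ring
    simpa [eq_of_eq_add_two_pi_mul_int (hΘ θ hθ) ⟨le_rfl, two_pi_pos⟩ hθ₀] using hθ
  · obtain ⟨θ, hθ, m, hm⟩ := hsub ℓ (Finset.mem_Icc.2 ⟨hℓ₀, hℓ.le⟩)
    have hθℓ : θ = 2 * π / j * ℓ + 2 * π * m := by rw [hm]; ring
    rwa [← eq_of_eq_add_two_pi_mul_int (hΘ θ hθ) (two_pi_div_mul_mem_Ico hℓ) hθℓ]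

lemma card_regularAngles {j : ℕ} (hj : 0 < j) : (regularAngles j).card = j := by
  rw [regularAngles, Finset.card_image_of_injective, Finset.card_range]
  exact (mul_right_injective₀ (by positivity)).comp Nat.cast_injective

lemma mul_natCast_notMem_Ioo {δ : ℝ} (hδ : 0 < δ) (m ℓ : ℕ) :
    δ * m ∉ Set.Ioo (δ * ℓ) (δ * (ℓ + 1)) := by
  rintro ⟨h₁, h₂⟩
  have h₁' : (ℓ : ℝ) < m := lt_of_mul_lt_mul_left h₁ hδ.le
  have h₂' : (m : ℝ) < ℓ + 1 := lt_of_mul_lt_mul_left h₂ hδ.le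
  norm_cast at h₁' h₂'
  omega

lemma exists_forall_notMem_Ioo_of_card_lt {δ : ℝ} (hδ : 0 < δ) {S : Finset ℝ} {j : ℕ}
    (hS : S.card < j) : ∃ ℓ < j, ∀ x ∈ S, x ∉ Set.Ioo (δ * ℓ) (δ * (ℓ + 1)) := by
  by_contra! h
  choose! f hfS hf using h
  have hinj : Set.InjOn f (Finset.range j) := by
    intro a ha b hb hab
    have ha' := hf a (Finset.mem_range.1 ha)
    have hb' := hf b (Finset.mem_range.1 hb)
    rw [hab] at ha'
    have h₁ : (a : ℝ) < b + 1 := lt_of_mul_lt_mul_left (ha'.1.trans hb'.2) hδ.le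
    have h₂ : (b : ℝ) < a + 1 := lt_of_mul_lt_mul_left (hb'.1.trans ha'.2) hδ.le
    norm_cast at h₁ h₂
    omega
  have := Finset.card_le_card_of_injOn f (fun ℓ hℓ => hfS ℓ (Finset.mem_range.1 hℓ)) hinj
  rw [Finset.card_range] at this
  omega

lemma exists_regular_arc_free {Θ : Finset ℝ} {j : ℕ} (hj : 0 < j)
    (hR : regularAngles j ⊆ Θ) (hk : Θ.card < 2 * j) :
    ∃ ℓ < j, ∀ θ ∈ Θ, θ ∉ Set.Ioo (2 * π / j * ℓ) (2 * π / j * ℓ + 2 * (π / j)) := by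
  have hδ : 0 < 2 * π / j := by positivity
  have hS : (Θ \ regularAngles j).card < j := by
    rw [Finset.card_sdiff_of_subset hR, card_regularAngles hj]
    omega
  obtain ⟨ℓ, hℓ, hfree⟩ := exists_forall_notMem_Ioo_of_card_lt hδ hS
  refine ⟨ℓ, hℓ, fun θ hθ => ?_⟩
  rw [show 2 * π / j * ℓ + 2 * (π / j) = 2 * π / j * (ℓ + 1) by ring]
  by_cases hθR : θ ∈ regularAngles j
  · obtain ⟨m, -, rfl⟩ := Finset.mem_image.1 hθR
    exact mul_natCast_notMem_Ioo hδ m ℓ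
  · exact hfree θ (Finset.mem_sdiff.2 ⟨hθ, hθR⟩)

/-- Theorem 4.1 (iii). If a finite set `Θ ⊆ [0, 2π)` of `k` supporting
angles contains (modulo `2π`) all angles `2πℓ/j` of a regular circumscribing `j`-gon of the
disk of radius `r`, and the resulting polygon `G_Θ` has maximal modulus strictly smaller
than `r·sec(π/j)`, then `k ≥ 2j`. -/
theorem polygon_refinement_doubling (r : ℝ) (hr : 0 < r) (j k : ℕ) (hj : 3 ≤ j)
    (Θ : Finset ℝ) (hΘ : ∀ θ ∈ Θ, 0 ≤ θ ∧ θ < 2 * Real.pi)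
    (hcard : Θ.card = k)
    (hsub : ∀ ℓ ∈ Finset.Icc 1 j, ∃ θ ∈ Θ, ∃ m : ℤ,
      θ = 2 * Real.pi * ℓ / j + 2 * Real.pi * m)
    (h : sSup ((fun z => ‖z‖) ''
        {z : ℂ | ∀ θ ∈ Θ, (Complex.exp ((θ : ℂ) * Complex.I) * z).re ≤ r})
      < r * (1 / Real.cos (Real.pi / j))) :
    2 * j ≤ k := by
  change sSup ((fun z => ‖z‖) '' supportPolygon Θ r) < r * (1 / cos (π / j)) at h
  have hj₀ : 0 < j := by omega
  have hc := cos_pi_div_pos (by omega : 2 < j)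
  have hR := regularAngles_subset hj₀ hΘ hsub
  have hbdd (z) (hz : z ∈ supportPolygon Θ r) : ‖z‖ ≤ r / cos (π / j) :=
    (le_div_iff₀ hc).2 (norm_mul_cos_le_of_mem_supportPolygon hj₀ hR hz)
  by_contra! hk
  obtain ⟨ℓ, hℓ, hfree⟩ := exists_regular_arc_free hj₀ hR (hcard ▸ hk)
  obtain ⟨w, hw, hnorm⟩ := exists_mem_supportPolygon_norm_eq_div_cos hr.le (by positivity) hc hΘ
    (by positivity) (two_pi_div_mul_add_two_mul_pi_div_le hℓ) hfree
  have hsup := le_csSup ⟨r / cos (π / j), Set.forall_mem_image.2 hbdd⟩ ⟨w, hw, hnorm⟩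
  rw [mul_one_div] at h
  linarith
end

section
/- Let μ ∈ (0, 1] and let (φ_k)_{k≥0} be the real sequence defined by φ_0 ∈ (0, π) and the recursion φ_{k+1} = arctan(μ·tan(φ_k/2)). Then φ_k > 0 for all k, φ_k → 0 as k → ∞, and the convergence is Q-linear with rate μ/2, i.e., lim_{k→∞} φ_{k+1}/φ_k = μ/2. -/
/-!
Write `f x = arctan (μ tan (x/2))`, so that `φ (k+1) = f (φ k)`. The map `f` sends `(0, π)` into
`(0, π/2)`, and for `μ ≤ 1` it satisfies `f x ≤ arctan (tan (x/2)) = x/2`; hence the angles stay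
positive and decay at least like `φ 0 / 2^k`. Since `f 0 = 0` and `f' 0 = μ/2`, the quotient
`φ (k+1) / φ k` is a difference quotient of `f` at `0` along a sequence tending to `0`.
-/

open Real Filter Set Topology

theorem tendsto_zero_of_le_mul_of_nonneg {u : ℕ → ℝ} {c : ℝ} (hc₀ : 0 ≤ c) (hc₁ : c < 1)
    (hu : ∀ k, 0 ≤ u k) (hle : ∀ k, u (k + 1) ≤ c * u k) : Tendsto u atTop (𝓝 0) := by
  have hgeom : Tendsto (fun k => c ^ k * u 0) atTop (𝓝 0) := by
    simpa using (tendsto_pow_atTop_nhds_zero_of_lt_one hc₀ hc₁).mul_const (u 0)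
  exact squeeze_zero hu (fun k => le_geom hc₀ k fun j _ => hle j) hgeom

theorem tendsto_div_sub_of_hasDerivAt {f : ℝ → ℝ} {u : ℕ → ℝ} {a c : ℝ}
    (hf : HasDerivAt f c a) (hfa : f a = a) (hu : Tendsto u atTop (𝓝 a))
    (hne : ∀ᶠ k in atTop, u k ≠ a) (hrec : ∀ k, u (k + 1) = f (u k)) :
    Tendsto (fun k => (u (k + 1) - a) / (u k - a)) atTop (𝓝 c) := by
  have hu' : Tendsto u atTop (𝓝[≠] a) := tendsto_nhdsWithin_of_tendsto_nhds_of_eventually_within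
    _ hu hne
  convert hf.tendsto_slope.comp hu' using 2 with k
  rw [Function.comp_apply, slope_def_field, hrec, hfa]

noncomputable def uhligMap (μ x : ℝ) : ℝ := arctan (μ * tan (x / 2))

namespace uhligMap

variable {μ x : ℝ}

@[simp]
theorem zero_right (μ : ℝ) : uhligMap μ 0 = 0 := by simp [uhligMap]

theorem mapsTo_Ioo (hμ : 0 < μ) : MapsTo (uhligMap μ) (Ioo 0 π) (Ioo 0 π) := by
  rintro x ⟨hx₀, hxπ⟩
  have htan : 0 < tan (x / 2) := tan_pos_of_pos_of_lt_pi_div_two (by linarith) (by linarith)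
  exact ⟨arctan_pos.mpr (mul_pos hμ htan), (arctan_lt_pi_div_two _).trans (by linarith [pi_pos])⟩

theorem le_half (hμ : μ ≤ 1) (hx₀ : 0 ≤ x) (hxπ : x < π) : uhligMap μ x ≤ x / 2 := by
  have htan : 0 ≤ tan (x / 2) := tan_nonneg_of_nonneg_of_le_pi_div_two (by linarith) (by linarith)
  calc uhligMap μ x ≤ arctan (tan (x / 2)) :=
        arctan_strictMono.monotone (mul_le_of_le_one_left htan hμ)
    _ = x / 2 := arctan_tan (by linarith [pi_pos]) (by linarith)

theorem hasDerivAt_zero (μ : ℝ) : HasDerivAt (uhligMap μ) (μ / 2) 0 := by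
  have htan : HasDerivAt (fun x : ℝ => tan (x / 2)) (1 / cos (0 / 2) ^ 2 * (1 / 2)) 0 :=
    (hasDerivAt_tan (by simp)).comp 0 ((hasDerivAt_id 0).div_const 2)
  show HasDerivAt (fun x => arctan (μ * tan (x / 2))) _ 0
  convert (htan.const_mul μ).arctan using 1
  simp only [zero_div, tan_zero, cos_zero, mul_zero]
  ring

end uhligMap

/-- Theorem 4.6. The angles produced by Uhlig's cutting procedure,
`φ_{k+1} = arctan(μ·tan(φ_k/2))` with `φ_0 ∈ (0, π)`, stay positive and converge to zero
Q-linearly with rate `μ/2`. -/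
theorem uhlig_angle_convergence (μ : ℝ) (hμ1 : 0 < μ) (hμ2 : μ ≤ 1)
    (φ : ℕ → ℝ) (h0 : 0 < φ 0) (h0' : φ 0 < Real.pi)
    (hrec : ∀ k, φ (k + 1) = Real.arctan (μ * Real.tan (φ k / 2))) :
    (∀ k, 0 < φ k) ∧
    Filter.Tendsto φ Filter.atTop (nhds 0) ∧
    Filter.Tendsto (fun k => φ (k + 1) / φ k) Filter.atTop (nhds (μ / 2)) := by
  have hmem : ∀ k, φ k ∈ Ioo 0 π := by
    intro k
    induction k with
    | zero => exact ⟨h0, h0'⟩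
    | succ k ih => exact hrec k ▸ uhligMap.mapsTo_Ioo hμ1 ih
  have hpos : ∀ k, 0 < φ k := fun k => (hmem k).1
  have hhalf : ∀ k, φ (k + 1) ≤ 1 / 2 * φ k := fun k => by
    rw [hrec, one_div_mul_eq_div]
    exact uhligMap.le_half hμ2 (hpos k).le (hmem k).2
  have hlim : Tendsto φ atTop (𝓝 0) :=
    tendsto_zero_of_le_mul_of_nonneg (by norm_num) (by norm_num) (fun k => (hpos k).le) hhalf
  refine ⟨hpos, hlim, ?_⟩
  simpa using tendsto_div_sub_of_hasDerivAt (uhligMap.hasDerivAt_zero μ) (uhligMap.zero_right μ)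
    hlim (.of_forall fun k => (hpos k).ne') hrec
end

section
/- Let μ ∈ (0, 1], r > 0, and let (φ_k)_{k≥0} be the real sequence defined by φ_0 ∈ (0, π/2) and the recursion φ_{k+1} = arctan(μ·tan(φ_k/2)). Then the sequence (r·sec(φ_k))_{k≥0} converges to r Q-linearly with rate μ²/4, i.e., lim_{k→∞} (r·sec(φ_{k+1}) − r)/(r·sec(φ_k) − r) = μ²/4. -/
open Real Filter Topology Set

/-! Both ratios are governed by Taylor expansions at `0`. The step
`x ↦ arctan (μ tan (x / 2))` has derivative `μ / 2` at `0`, so once `φ k → 0` (for `μ ≤ 1`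
the step at least halves the angle) we get `φ (k + 1) / φ k → μ / 2`. Since
`sec x - 1 ~ x ^ 2 / 2`, the ratio of consecutive defects `r sec φ k - r` behaves like
`(φ (k + 1) / φ k) ^ 2`, which tends to `μ ^ 2 / 4`. -/

lemma tendsto_div_self_of_hasDerivAt {f : ℝ → ℝ} {L : ℝ} (hf : HasDerivAt f L 0)
    (hf0 : f 0 = 0) :
    Tendsto (fun x => f x / x) (𝓝[≠] 0) (𝓝 L) := by
  simpa [hf0, div_eq_inv_mul] using hf.tendsto_slope_zero

lemma tendsto_zero_of_le_mul_of_lt_one {u : ℕ → ℝ} {q : ℝ} (hq0 : 0 ≤ q) (hq : q < 1)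
    (hu : ∀ k, 0 ≤ u k) (h : ∀ k, u (k + 1) ≤ q * u k) : Tendsto u atTop (𝓝 0) := by
  have hgeom := (tendsto_pow_atTop_nhds_zero_of_lt_one hq0 hq).mul_const (u 0)
  rw [zero_mul] at hgeom
  exact tendsto_of_tendsto_of_tendsto_of_le_of_le tendsto_const_nhds hgeom hu
    fun k => le_geom hq0 k fun j _ => h j

lemma tendsto_sec_sub_one_div_sq :
    Tendsto (fun x => (1 / cos x - 1) / x ^ 2) (𝓝[≠] 0) (𝓝 (1 / 2)) := by
  have hsin : Tendsto (fun x => sin x / x) (𝓝[≠] 0) (𝓝 1) :=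
    tendsto_div_self_of_hasDerivAt (by simpa using hasDerivAt_sin 0) sin_zero
  have hcos : Tendsto cos (𝓝[≠] 0) (𝓝 1) := by
    simpa using continuous_cos.continuousWithinAt (s := {0}ᶜ) (x := 0) |>.tendsto
  -- `1 / cos x - 1 = sin x ^ 2 / ((1 + cos x) * cos x)`
  have hlim := (hsin.pow 2).div ((tendsto_const_nhds (x := (1 : ℝ))).add hcos |>.mul hcos)
    (by norm_num)
  norm_num at hlim
  refine hlim.congr' ?_
  have hcos_pos : ∀ᶠ x in 𝓝[≠] (0 : ℝ), 0 < cos x :=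
    hcos.eventually (lt_mem_nhds one_pos)
  filter_upwards [hcos_pos, self_mem_nhdsWithin] with x hx (hx0 : x ≠ 0)
  have hx1 : 1 + cos x ≠ 0 := by positivity
  simp only [Pi.div_apply]
  field_simp
  linear_combination sin_sq_add_cos_sq x

lemma tendsto_const_mul_sec_sub_ratio {ψ : ℕ → ℝ} {r c : ℝ} (hr : r ≠ 0)
    (hψ : Tendsto ψ atTop (𝓝[≠] 0))
    (hc : Tendsto (fun k => ψ (k + 1) / ψ k) atTop (𝓝 c)) :
    Tendsto (fun k => (r * (1 / cos (ψ (k + 1))) - r) / (r * (1 / cos (ψ k)) - r)) atTop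
      (𝓝 (c ^ 2)) := by
  have hG := tendsto_sec_sub_one_div_sq.comp hψ
  have hlim := ((hG.comp (tendsto_add_atTop_nat 1)).div hG (by norm_num)).mul (hc.pow 2)
  rw [div_self (by norm_num), one_mul] at hlim
  refine hlim.congr' ?_
  have hne : ∀ᶠ k in atTop, ψ k ≠ 0 := hψ.eventually self_mem_nhdsWithin
  filter_upwards [hne, (tendsto_add_atTop_nat 1).eventually hne] with k hk hk'
  simp only [Function.comp_apply, Pi.div_apply]
  rw [← mul_sub_one, ← mul_sub_one, mul_div_mul_left _ _ hr]
  field_simp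

noncomputable def uhligStep (μ x : ℝ) : ℝ := arctan (μ * tan (x / 2))

lemma uhligStep_pos {μ x : ℝ} (hμ : 0 < μ) (hx : x ∈ Ioo 0 π) : 0 < uhligStep μ x := by
  have htan : 0 < tan (x / 2) :=
    tan_pos_of_pos_of_lt_pi_div_two (by linarith [hx.1]) (by linarith [hx.2])
  simpa [uhligStep] using arctan_strictMono (mul_pos hμ htan)

lemma uhligStep_le_half {μ x : ℝ} (hμ : μ ≤ 1) (hx : x ∈ Ico 0 π) :
    uhligStep μ x ≤ x / 2 := by
  have htan : 0 ≤ tan (x / 2) :=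
    tan_nonneg_of_nonneg_of_le_pi_div_two (by linarith [hx.1]) (by linarith [hx.2])
  calc uhligStep μ x ≤ arctan (tan (x / 2)) := arctan_strictMono.monotone (by nlinarith)
    _ = x / 2 := arctan_tan (by linarith [hx.1, pi_pos]) (by linarith [hx.2])

lemma hasDerivAt_uhligStep (μ : ℝ) : HasDerivAt (uhligStep μ) (μ / 2) 0 := by
  have htan : HasDerivAt (fun x => tan (x / 2)) (1 / 2) 0 := by
    simpa [Function.comp_def] using (hasDerivAt_tan (x := (0 : ℝ) / 2) (by simp)).comp (0 : ℝ)
      ((hasDerivAt_id (0 : ℝ)).div_const 2)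
  show HasDerivAt (fun x => arctan (μ * tan (x / 2))) (μ / 2) 0
  simpa [div_eq_mul_inv] using (htan.const_mul μ).arctan

/-- Theorem 4.7. For the angles `φ_{k+1} = arctan(μ·tan(φ_k/2))` of
Uhlig's cutting procedure with `φ_0 ∈ (0, π/2)`, the corner moduli `r·sec(φ_k)` converge
to `r` Q-linearly with rate `μ²/4`. -/
theorem uhlig_corner_convergence (μ r : ℝ) (hμ1 : 0 < μ) (hμ2 : μ ≤ 1) (hr : 0 < r)
    (φ : ℕ → ℝ) (h0 : 0 < φ 0) (h0' : φ 0 < Real.pi / 2)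
    (hrec : ∀ k, φ (k + 1) = Real.arctan (μ * Real.tan (φ k / 2))) :
    Filter.Tendsto (fun k => r * (1 / Real.cos (φ k))) Filter.atTop (nhds r) ∧
    Filter.Tendsto
      (fun k => (r * (1 / Real.cos (φ (k + 1))) - r) / (r * (1 / Real.cos (φ k)) - r))
      Filter.atTop (nhds (μ ^ 2 / 4)) := by
  have hstep : ∀ k, φ (k + 1) = uhligStep μ (φ k) := hrec
  have hmem : ∀ k, φ k ∈ Ioo 0 (π / 2) := by
    intro k
    induction k with
    | zero => exact ⟨h0, h0'⟩
    | succ k ih =>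
      rw [hstep]
      exact ⟨uhligStep_pos hμ1 ⟨ih.1, by linarith [ih.2, pi_pos]⟩, arctan_lt_pi_div_two _⟩
  have hφ : Tendsto φ atTop (𝓝 0) :=
    tendsto_zero_of_le_mul_of_lt_one (q := 1 / 2) (by norm_num) (by norm_num)
      (fun k => (hmem k).1.le) fun k => by
        rw [hstep, one_div_mul_eq_div]
        exact uhligStep_le_half hμ2 ⟨(hmem k).1.le, by linarith [(hmem k).2, pi_pos]⟩
  have hφ' : Tendsto φ atTop (𝓝[≠] 0) :=
    tendsto_nhdsWithin_of_tendsto_nhds_of_eventually_within _ hφ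
      (.of_forall fun k => (hmem k).1.ne')
  have hratio : Tendsto (fun k => φ (k + 1) / φ k) atTop (𝓝 (μ / 2)) := by
    simp only [hstep]
    exact (tendsto_div_self_of_hasDerivAt (hasDerivAt_uhligStep μ)
      (by simp [uhligStep])).comp hφ'
  refine ⟨?_, ?_⟩
  · simpa using ((continuous_cos.tendsto 0).comp hφ).inv₀ (by simp) |>.const_mul r
  · convert tendsto_const_mul_sec_sub_ratio hr.ne' hφ' hratio using 2
    ring
end

section
/- Let s > 0 and r̃ > 0 be real numbers, and define t : ℝ → ℝ by t(φ) = −s·sin(φ) + sqrt(s²·sin²(φ) + 2·s·r̃·(1 − cos(φ))). Let (φ_k)_{k≥0} be a real sequence with φ_0 ∈ (0, π/2), satisfying the recursion φ_{k+1} = −φ_k + 2·arctan( (r̃·sin(φ_k) − t(φ_k)·cos(φ_k)) / (r̃·cos(φ_k) + t(φ_k)·sin(φ_k)) ) for all k, and such that 0 < φ_{k+1} < φ_k for all k. Then lim_{k→∞} φ_k = 0. -/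
/-- Lemma 5.3. The strictly decreasing positive sequence of angles
produced by the optimal-cut recursion converges to zero. -/
theorem optimal_cut_angles_to_zero (s rt : ℝ) (hs : 0 < s) (hrt : 0 < rt)
    (t : ℝ → ℝ)
    (ht : ∀ φ : ℝ, t φ = -s * Real.sin φ +
      Real.sqrt (s ^ 2 * Real.sin φ ^ 2 + 2 * s * rt * (1 - Real.cos φ)))
    (φ : ℕ → ℝ) (h0 : 0 < φ 0) (h0' : φ 0 < Real.pi / 2)
    (hrec : ∀ k, φ (k + 1) = -φ k + 2 * Real.arctan
      ((rt * Real.sin (φ k) - t (φ k) * Real.cos (φ k)) /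
        (rt * Real.cos (φ k) + t (φ k) * Real.sin (φ k))))
    (hmono : ∀ k, 0 < φ (k + 1) ∧ φ (k + 1) < φ k) :
    Filter.Tendsto φ Filter.atTop (nhds 0) := by
  have hpos : ∀ k, 0 < φ k := by
    intro k
    cases k with
    | zero => exact h0
    | succ n => exact (hmono n).1
  have hanti : Antitone φ := antitone_nat_of_succ_le fun n => (hmono n).2.le
  have hbdd : BddBelow (Set.range φ) := ⟨0, by rintro x ⟨k, rfl⟩; exact (hpos k).le⟩
  have htend : Filter.Tendsto φ Filter.atTop (nhds (⨅ k, φ k)) :=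
    tendsto_atTop_ciInf hanti hbdd
  set L := ⨅ k, φ k with hLdef
  have hL0 : 0 ≤ L := le_ciInf fun k => (hpos k).le
  rcases eq_or_lt_of_le hL0 with h | h
  · rwa [← h] at htend
  · exfalso
    have hLlt : L < Real.pi / 2 := lt_of_le_of_lt (ciInf_le hbdd 0) h0'
    have htfun : t = fun x => -s * Real.sin x +
        Real.sqrt (s ^ 2 * Real.sin x ^ 2 + 2 * s * rt * (1 - Real.cos x)) := funext ht
    have hpi : 0 < Real.pi := Real.pi_pos
    have hsinL : 0 < Real.sin L :=
      Real.sin_pos_of_pos_of_lt_pi h (by linarith)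
    have hcosL : 0 < Real.cos L :=
      Real.cos_pos_of_mem_Ioo ⟨by linarith, hLlt⟩
    have hcos1 : Real.cos L < 1 := by
      have := Real.cos_lt_cos_of_nonneg_of_le_pi (le_refl 0) (by linarith) h
      simpa using this
    have htL : 0 < t L := by
      rw [ht]
      have hsq : Real.sqrt (s ^ 2 * Real.sin L ^ 2) = s * Real.sin L := by
        rw [show s ^ 2 * Real.sin L ^ 2 = (s * Real.sin L) ^ 2 by ring,
          Real.sqrt_sq (by positivity)]
      have h1 : Real.sqrt (s ^ 2 * Real.sin L ^ 2)
          < Real.sqrt (s ^ 2 * Real.sin L ^ 2 + 2 * s * rt * (1 - Real.cos L)) := by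
        apply Real.sqrt_lt_sqrt (by positivity)
        nlinarith [mul_pos hs hrt]
      rw [hsq] at h1
      linarith
    -- fixed point equation
    set F : ℝ → ℝ := fun x => -x + 2 * Real.arctan
      ((rt * Real.sin x - t x * Real.cos x) / (rt * Real.cos x + t x * Real.sin x)) with hFdef
    have hden : rt * Real.cos L + t L * Real.sin L ≠ 0 := by positivity
    have htcont : Continuous t := by
      rw [htfun]
      continuity
    have hFcont : ContinuousAt F L := by
      apply ContinuousAt.add (continuousAt_id.neg)
      apply ContinuousAt.mul continuousAt_const
      apply Real.continuous_arctan.continuousAt.comp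
      apply ContinuousAt.div
      · exact ((continuous_const.mul Real.continuous_sin).sub
          (htcont.mul Real.continuous_cos)).continuousAt
      · exact ((continuous_const.mul Real.continuous_cos).add
          (htcont.mul Real.continuous_sin)).continuousAt
      · exact hden
    have h1 : Filter.Tendsto (fun k => F (φ k)) Filter.atTop (nhds (F L)) :=
      hFcont.tendsto.comp htend
    have h2 : Filter.Tendsto (fun k => F (φ k)) Filter.atTop (nhds L) := by
      have : (fun k => F (φ k)) = fun k => φ (k + 1) := by
        funext k; rw [hrec k]
      rw [this]
      exact htend.comp (Filter.tendsto_add_atTop_nat 1)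
    have hfix : F L = L := tendsto_nhds_unique h1 h2
    have harc : Real.arctan ((rt * Real.sin L - t L * Real.cos L) /
        (rt * Real.cos L + t L * Real.sin L)) = L := by
      have : -L + 2 * Real.arctan ((rt * Real.sin L - t L * Real.cos L) /
          (rt * Real.cos L + t L * Real.sin L)) = L := hfix
      linarith
    have htan : (rt * Real.sin L - t L * Real.cos L) /
        (rt * Real.cos L + t L * Real.sin L) = Real.tan L := by
      have := congrArg Real.tan harc
      rwa [Real.tan_arctan] at this
    rw [Real.tan_eq_sin_div_cos] at htan
    have hcross : (rt * Real.sin L - t L * Real.cos L) * Real.cos L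
        = Real.sin L * (rt * Real.cos L + t L * Real.sin L) :=
      (div_eq_div_iff hden (ne_of_gt hcosL)).mp htan
    nlinarith [Real.sin_sq_add_cos_sq L]
end

section
/- Let s > 0 and r̃ > 0 be real numbers, set r = s + r̃ and μ = r̃/r ∈ (0, 1), and define t : ℝ → ℝ by t(φ) = −s·sin(φ) + sqrt(s²·sin²(φ) + 2·s·r̃·(1 − cos(φ))). Let (φ_k)_{k≥0} be a real sequence with φ_k ∈ (0, π/2) for all k, φ_k → 0 as k → ∞, satisfying the recursion φ_{k+1} = −φ_k + 2·arctan( (r̃·sin(φ_k) − t(φ_k)·cos(φ_k)) / (r̃·cos(φ_k) + t(φ_k)·sin(φ_k)) ) for all k. Then the sequence converges to zero Q-linearly with rate 2·(1 − sqrt(1 − μ))/μ − 1, i.e., lim_{k→∞} φ_{k+1}/φ_k = 2·(1 − sqrt(1 − μ))/μ − 1. -/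
/-!
As `φ → 0⁺` we have `sin φ ~ φ` and `1 - cos φ ~ φ² / 2`, hence `t(φ) ~ (√(s r) - s) φ`,
the argument of `arctan` in the recursion is `~ (r - √(s r)) / r̃ · φ`, and `arctan y ~ y`.
So the step map `φ ↦ φ'` has `φ' / φ → -1 + 2 (r - √(s r)) / r̃`, which is the claimed
rate because `√(1 - μ) = √(s r) / r`.
-/

open Real Filter Topology Asymptotics

/-- `u` may vanish, so this is not just `f y / y → c` composed with `u`. -/
theorem HasDerivAt.tendsto_comp_div {α : Type*} {l : Filter α} {f : ℝ → ℝ} {c a : ℝ}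
    (hf : HasDerivAt f c 0) (hf0 : f 0 = 0) {u v : α → ℝ} (hu : Tendsto u l (𝓝 0))
    (huv : Tendsto (fun x => u x / v x) l (𝓝 a)) (hv : ∀ᶠ x in l, v x ≠ 0) :
    Tendsto (fun x => f (u x) / v x) l (𝓝 (c * a)) := by
  have hlin : (fun y => f y - y * c) =o[𝓝 0] fun y => y := by
    simpa [hf0] using hasDerivAt_iff_isLittleO.mp hf
  have hO : u =O[l] v :=
    isBigO_of_div_tendsto_nhds (hv.mono fun x hx h => absurd h hx) a huv
  have herr := ((hlin.comp_tendsto hu).trans_isBigO hO).tendsto_div_nhds_zero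
  have := herr.add (huv.const_mul c)
  simp only [zero_add] at this
  refine this.congr fun x => ?_
  simp only [Function.comp_apply]
  ring

theorem HasDerivAt.tendsto_div_self {f : ℝ → ℝ} {c : ℝ} (hf : HasDerivAt f c 0)
    (hf0 : f 0 = 0) : Tendsto (fun x => f x / x) (𝓝[≠] 0) (𝓝 c) := by
  simpa using hf.tendsto_comp_div hf0 (l := 𝓝[≠] 0) (u := fun x => x) (v := fun x => x)
    (a := 1) (tendsto_nhdsWithin_of_tendsto_nhds tendsto_id)
    (tendsto_const_nhds.congr' (eventually_nhdsWithin_of_forall fun x hx => (div_self hx).symm))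
    self_mem_nhdsWithin

theorem tendsto_sin_div_self : Tendsto (fun x => sin x / x) (𝓝[≠] 0) (𝓝 1) := by
  simpa using (hasDerivAt_sin 0).tendsto_div_self sin_zero

theorem tendsto_one_sub_cos_div_sq :
    Tendsto (fun x => (1 - cos x) / x ^ 2) (𝓝[≠] 0) (𝓝 (1 / 2)) := by
  have hhalf : Tendsto (fun x : ℝ => sin (x / 2) / x) (𝓝[≠] 0) (𝓝 (1 / 2)) := by
    simpa using (hasDerivAt_sin 0).tendsto_comp_div sin_zero (l := 𝓝[≠] 0)
      (u := fun x => x / 2) (v := fun x => x) (a := 1 / 2)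
      (by simpa using (tendsto_nhdsWithin_of_tendsto_nhds tendsto_id (a := (0 : ℝ))).div_const 2)
      (tendsto_const_nhds.congr'
        (eventually_nhdsWithin_of_forall fun x (hx : x ≠ 0) => by field_simp))
      self_mem_nhdsWithin
  have := (hhalf.pow 2).const_mul 2
  norm_num at this
  refine this.congr fun x => ?_
  rw [show (1 : ℝ) - cos x = 2 * sin (x / 2) ^ 2 by
    rw [sin_sq_eq_half_sub, show 2 * (x / 2) = x by ring]; ring]
  ring

noncomputable section

def cutT (s rt x : ℝ) : ℝ := -s * sin x + √(s ^ 2 * sin x ^ 2 + 2 * s * rt * (1 - cos x))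

def cutTan (s rt x : ℝ) : ℝ :=
  (rt * sin x - cutT s rt x * cos x) / (rt * cos x + cutT s rt x * sin x)

def cutStep (s rt x : ℝ) : ℝ := -x + 2 * arctan (cutTan s rt x)

end

section

variable (s rt : ℝ)

theorem continuous_cutT : Continuous (cutT s rt) := by
  unfold cutT; fun_prop

theorem tendsto_cutT : Tendsto (cutT s rt) (𝓝 0) (𝓝 0) := by
  simpa [cutT] using (continuous_cutT s rt).tendsto 0

theorem tendsto_cutT_div :
    Tendsto (fun x => cutT s rt x / x) (𝓝[>] 0) (𝓝 (√(s * (s + rt)) - s)) := by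
  have hsin := tendsto_sin_div_self.mono_left (nhdsGT_le_nhdsNE 0)
  have hcos := tendsto_one_sub_cos_div_sq.mono_left (nhdsGT_le_nhdsNE 0)
  have hrad := ((hsin.pow 2).const_mul (s ^ 2)).add (hcos.const_mul (2 * s * rt))
  have hval : -s * 1 + √(s ^ 2 * 1 ^ 2 + 2 * s * rt * (1 / 2)) = √(s * (s + rt)) - s := by
    ring_nf
  rw [← hval]
  refine ((hsin.const_mul (-s)).add hrad.sqrt).congr'
    (eventually_nhdsWithin_of_forall fun x (hx : 0 < x) => ?_)
  have hrad_div : s ^ 2 * (sin x / x) ^ 2 + 2 * s * rt * ((1 - cos x) / x ^ 2)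
      = (s ^ 2 * sin x ^ 2 + 2 * s * rt * (1 - cos x)) / x ^ 2 := by
    field_simp
  dsimp only
  rw [hrad_div, sqrt_div' _ (sq_nonneg x), sqrt_sq hx.le, cutT]
  ring

variable {rt}

theorem tendsto_cutTan_div (hrt : rt ≠ 0) :
    Tendsto (fun x => cutTan s rt x / x) (𝓝[>] 0) (𝓝 ((rt + s - √(s * (s + rt))) / rt)) := by
  have hsin := tendsto_sin_div_self.mono_left (nhdsGT_le_nhdsNE 0)
  have hcos : Tendsto cos (𝓝[>] 0) (𝓝 1) :=
    (continuous_cos.tendsto' 0 1 cos_zero).mono_left nhdsWithin_le_nhds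
  have hsin0 : Tendsto sin (𝓝[>] 0) (𝓝 0) :=
    (continuous_sin.tendsto' 0 0 sin_zero).mono_left nhdsWithin_le_nhds
  have hnum := (hsin.const_mul rt).sub ((tendsto_cutT_div s rt).mul hcos)
  have hden := (hcos.const_mul rt).add
    (((tendsto_cutT s rt).mono_left nhdsWithin_le_nhds).mul hsin0)
  have hval : (rt * 1 - (√(s * (s + rt)) - s) * 1) / (rt * 1 + 0 * 0)
      = (rt + s - √(s * (s + rt))) / rt := by ring
  rw [← hval]
  refine (hnum.div hden (by simpa using hrt)).congr'
    (eventually_nhdsWithin_of_forall fun x (hx : 0 < x) => ?_)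
  dsimp only [Pi.div_apply]
  rw [cutTan, div_right_comm]
  congr 1
  field_simp

theorem tendsto_cutStep_div (hrt : rt ≠ 0) :
    Tendsto (fun x => cutStep s rt x / x) (𝓝[>] 0)
      (𝓝 (-1 + 2 * ((rt + s - √(s * (s + rt))) / rt))) := by
  have hdiv := tendsto_cutTan_div s hrt
  have hne : ∀ᶠ x : ℝ in 𝓝[>] 0, x ≠ 0 :=
    eventually_nhdsWithin_of_forall fun x hx => ne_of_gt hx
  have htan : Tendsto (cutTan s rt) (𝓝[>] 0) (𝓝 0) := by
    simpa using (hdiv.mul (tendsto_nhdsWithin_of_tendsto_nhds tendsto_id)).congr'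
      (hne.mono fun x hx => div_mul_cancel₀ _ hx)
  have harctan := (hasDerivAt_arctan' 0).tendsto_comp_div arctan_zero htan hdiv hne
  have hneg : Tendsto (fun x : ℝ => -x / x) (𝓝[>] 0) (𝓝 (-1)) :=
    tendsto_const_nhds.congr' (hne.mono fun x hx => by field_simp)
  have := hneg.add (harctan.const_mul 2)
  norm_num at this
  refine this.congr' (hne.mono fun x hx => ?_)
  dsimp only
  rw [cutStep]
  ring

end

theorem optimal_cut_convergence_rate_general (s rt : ℝ) (hs : 0 < s) (hrt : 0 < rt)
    (r : ℝ) (hr : r = s + rt) (μ : ℝ) (hμ : μ = rt / r)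
    (t : ℝ → ℝ)
    (ht : ∀ φ : ℝ, t φ = -s * Real.sin φ +
      Real.sqrt (s ^ 2 * Real.sin φ ^ 2 + 2 * s * rt * (1 - Real.cos φ)))
    (φ : ℕ → ℝ) (hpos : ∀ k, 0 < φ k)
    (hlim : Filter.Tendsto φ Filter.atTop (nhds 0))
    (hrec : ∀ k, φ (k + 1) = -φ k + 2 * Real.arctan
      ((rt * Real.sin (φ k) - t (φ k) * Real.cos (φ k)) /
        (rt * Real.cos (φ k) + t (φ k) * Real.sin (φ k)))) :
    Filter.Tendsto (fun k => φ (k + 1) / φ k) Filter.atTop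
      (nhds (2 * (1 - Real.sqrt (1 - μ)) / μ - 1)) := by
  obtain rfl : t = cutT s rt := funext ht
  have hr0 : 0 < r := by linarith
  have hsqrt : √(1 - μ) = √(s * r) / r := by
    rw [hμ, ← sqrt_sq hr0.le, ← sqrt_div' _ (sq_nonneg r), sqrt_sq hr0.le]
    congr 1
    field_simp
    linarith
  have hrate :
      2 * (1 - √(1 - μ)) / μ - 1 = -1 + 2 * ((rt + s - √(s * (s + rt))) / rt) := by
    rw [hsqrt, hμ, ← hr]
    field_simp
    linarith
  have hφ : Tendsto φ atTop (𝓝[>] 0) :=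
    tendsto_nhdsWithin_iff.2 ⟨hlim, Eventually.of_forall hpos⟩
  rw [hrate]
  refine ((tendsto_cutStep_div s hrt.ne').comp hφ).congr fun k => ?_
  rw [Function.comp_apply, hrec, cutStep, cutTan]

/-- Theorem 5.4. The angles produced by the optimal-cut recursion
converge to zero Q-linearly with rate `2·(1 - sqrt(1 - μ))/μ - 1`, where `μ = r̃/r`
and `r = s + r̃`. -/
theorem optimal_cut_convergence_rate (s rt : ℝ) (hs : 0 < s) (hrt : 0 < rt)
    (r : ℝ) (hr : r = s + rt) (μ : ℝ) (hμ : μ = rt / r)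
    (t : ℝ → ℝ)
    (ht : ∀ φ : ℝ, t φ = -s * Real.sin φ +
      Real.sqrt (s ^ 2 * Real.sin φ ^ 2 + 2 * s * rt * (1 - Real.cos φ)))
    (φ : ℕ → ℝ) (hpos : ∀ k, 0 < φ k) (hlt : ∀ k, φ k < Real.pi / 2)
    (hlim : Filter.Tendsto φ Filter.atTop (nhds 0))
    (hrec : ∀ k, φ (k + 1) = -φ k + 2 * Real.arctan
      ((rt * Real.sin (φ k) - t (φ k) * Real.cos (φ k)) /
        (rt * Real.cos (φ k) + t (φ k) * Real.sin (φ k)))) :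
    Filter.Tendsto (fun k => φ (k + 1) / φ k) Filter.atTop
      (nhds (2 * (1 - Real.sqrt (1 - μ)) / μ - 1)) :=
  optimal_cut_convergence_rate_general s rt hs hrt r hr μ hμ t ht φ hpos hlim hrec
end

section
/- Let A be an n×n complex matrix and define its numerical radius r(A) = sup{ |x*Ax| : x ∈ ℂⁿ, ‖x‖ = 1 }. Then r(A) = sup_{θ ∈ [0, π)} ρ(H(θ)), where H(θ) = (e^{iθ}A + e^{−iθ}A*)/2 and ρ(·) denotes the spectral radius, i.e., ρ(H(θ)) is the maximum of the absolute values of the (real) eigenvalues of the Hermitian matrix H(θ). -/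
/-!
For a unit vector `v` the quadratic form of `H(θ)` is `Re (e^{iθ} v*Av)`. An eigenvalue `c` of
`H(θ)` with unit eigenvector `w` is therefore `Re (e^{iθ} w*Aw)`, so `|c| ≤ |w*Aw| ≤ r(A)`.
Conversely, given `v`, rotating `v*Av` onto the real axis by some `θ ∈ [0, π)` (the sign of the
real part is irrelevant) gives `|v*Av| = |v*H(θ)v| ≤ ‖H(θ)‖`, and for the Hermitian matrix `H(θ)`
the operator norm is the spectral radius, attained at a real eigenvalue.
-/

open Matrix
open scoped Matrix.Norms.L2Operator

namespace Matrix

variable {𝕜 m : Type*} [RCLike 𝕜] [Fintype m]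

theorem star_dotProduct_self_eq_norm_sq (v : m → 𝕜) :
    star v ⬝ᵥ v = ((‖WithLp.toLp 2 v‖ ^ 2 : ℝ) : 𝕜) := by
  rw [dotProduct_comm, ← EuclideanSpace.inner_toLp_toLp, inner_self_eq_norm_sq_to_K]
  push_cast
  rfl

theorem exists_smul_star_dotProduct_self_eq_one {v : m → 𝕜} (hv : v ≠ 0) :
    ∃ t : 𝕜, star (t • v) ⬝ᵥ (t • v) = 1 := by
  have hv' : ‖WithLp.toLp 2 v‖ ≠ 0 := by simpa using hv
  refine ⟨(‖WithLp.toLp 2 v‖⁻¹ : ℝ), ?_⟩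
  rw [star_dotProduct_self_eq_norm_sq, WithLp.toLp_smul, norm_smul]
  simp [hv']

theorem star_dotProduct_inv_two_smul_add_conjTranspose_mulVec (B : Matrix m m 𝕜) (v : m → 𝕜) :
    star v ⬝ᵥ ((2⁻¹ : 𝕜) • (B + Bᴴ)) *ᵥ v = (RCLike.re (star v ⬝ᵥ B *ᵥ v) : 𝕜) := by
  have hconj : star v ⬝ᵥ Bᴴ *ᵥ v = star (star v ⬝ᵥ B *ᵥ v) := by
    rw [star_dotProduct, star_mulVec, conjTranspose_conjTranspose, dotProduct_mulVec]
  rw [smul_mulVec, add_mulVec, dotProduct_smul, dotProduct_add, hconj, smul_eq_mul,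
    RCLike.re_eq_add_conj, div_eq_inv_mul]
  rfl

omit [Fintype m] in
theorem isHermitian_inv_two_smul_add_conjTranspose (B : Matrix m m 𝕜) :
    ((2⁻¹ : 𝕜) • (B + Bᴴ)).IsHermitian := by
  simp [IsHermitian, conjTranspose_smul, add_comm]

variable [DecidableEq m]

theorem norm_star_dotProduct_mulVec_le (B : Matrix m m 𝕜) (v : m → 𝕜) :
    ‖star v ⬝ᵥ B *ᵥ v‖ ≤ ‖B‖ * ‖star v ⬝ᵥ v‖ := by
  rw [star_dotProduct_self_eq_norm_sq, RCLike.norm_ofReal, abs_of_nonneg (by positivity),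
    dotProduct_comm, ← EuclideanSpace.inner_toLp_toLp]
  calc _ ≤ ‖WithLp.toLp 2 v‖ * ‖WithLp.toLp 2 (B *ᵥ v)‖ := norm_inner_le_norm _ _
    _ ≤ ‖WithLp.toLp 2 v‖ * (‖B‖ * ‖WithLp.toLp 2 v‖) :=
      mul_le_mul_of_nonneg_left (B.l2_opNorm_mulVec _) (norm_nonneg _)
    _ = _ := by ring

theorem norm_le_l2_opNorm_of_mulVec_eq_smul {B : Matrix m m 𝕜} {v : m → 𝕜} {c : 𝕜} (hv : v ≠ 0)
    (hc : B *ᵥ v = c • v) : ‖c‖ ≤ ‖B‖ := by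
  have hv' : 0 < ‖WithLp.toLp 2 v‖ := norm_pos_iff.2 (by simpa using hv)
  refine le_of_mul_le_mul_right ?_ hv'
  simpa [hc, norm_smul] using B.l2_opNorm_mulVec (WithLp.toLp 2 v)

theorem exists_mulVec_eq_smul_of_mem_spectrum {B : Matrix m m 𝕜} {c : 𝕜}
    (hc : c ∈ spectrum 𝕜 B) : ∃ v, v ≠ 0 ∧ B *ᵥ v = c • v := by
  rw [← spectrum_toLin', ← Module.End.hasEigenvalue_iff_mem_spectrum] at hc
  obtain ⟨v, hv⟩ := hc.exists_hasEigenvector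
  exact ⟨v, hv.2, by simpa using hv.apply_eq_smul⟩

theorem IsHermitian.exists_eigenvalue_abs_eq_l2_opNorm [Nonempty m] {B : Matrix m m ℂ}
    (hB : B.IsHermitian) : ∃ c : ℝ, |c| = ‖B‖ ∧ ∃ v, v ≠ 0 ∧ B *ᵥ v = (c : ℂ) • v := by
  obtain ⟨k, hk, hk_norm⟩ := spectrum.exists_nnnorm_eq_spectralRadius B
  rw [hB.isSelfAdjoint.spectralRadius_eq_nnnorm, ENNReal.coe_inj] at hk_norm
  have hk_re : k = (k.re : ℂ) := hB.isSelfAdjoint.mem_spectrum_eq_re hk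
  refine ⟨k.re, ?_, hk_re ▸ exists_mulVec_eq_smul_of_mem_spectrum hk⟩
  rw [← Real.norm_eq_abs, ← Complex.norm_real, ← hk_re]
  exact congrArg NNReal.toReal hk_norm

end Matrix

theorem Complex.star_exp_ofReal_mul_I (θ : ℝ) :
    star (Complex.exp (θ * Complex.I)) = Complex.exp (-θ * Complex.I) := by
  change (starRingEnd ℂ) _ = _
  rw [← Complex.exp_conj]
  simp

theorem Complex.exists_abs_re_exp_mul_eq_norm (z : ℂ) :
    ∃ θ ∈ Set.Ico 0 Real.pi, |(Complex.exp (θ * Complex.I) * z).re| = ‖z‖ := by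
  have hz : Complex.exp (-z.arg * Complex.I) * z = ‖z‖ := by
    conv_lhs => rw [← Complex.norm_mul_exp_arg_mul_I z]
    rw [mul_left_comm, ← Complex.exp_add]
    simp
  rcases le_or_gt z.arg 0 with h | h
  · refine ⟨-z.arg, ⟨by linarith, by linarith [Complex.neg_pi_lt_arg z]⟩, ?_⟩
    rw [Complex.ofReal_neg, hz]
    simp
  · refine ⟨Real.pi - z.arg, ⟨by linarith [Complex.arg_le_pi z], by linarith⟩, ?_⟩
    rw [Complex.ofReal_sub, sub_mul, sub_eq_add_neg, Complex.exp_add, Complex.exp_pi_mul_I,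
      ← neg_mul, mul_assoc, hz]
    simp

/-- equation (2.6). The numerical radius equals the supremum over
`θ ∈ [0, π)` of the spectral radius of the Hermitian matrix
`H(θ) = (e^{iθ}A + e^{-iθ}A*)/2`.  Here "`x` is the spectral radius of `H(θ)`" is
expressed by: some real eigenvalue of `H(θ)` has absolute value `x`, and every real
eigenvalue of `H(θ)` has absolute value at most `x` (a Hermitian matrix has only real
eigenvalues). -/
theorem numerical_radius_eq_sup_specrad (n : ℕ) (A : Matrix (Fin n) (Fin n) ℂ)
    (H : ℝ → Matrix (Fin n) (Fin n) ℂ)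
    (hH : ∀ θ : ℝ, H θ = (2⁻¹ : ℂ) •
      (Complex.exp ((θ : ℂ) * Complex.I) • A + Complex.exp (-(θ : ℂ) * Complex.I) • Aᴴ)) :
    sSup {x : ℝ | ∃ v : Fin n → ℂ, star v ⬝ᵥ v = 1 ∧
        x = ‖star v ⬝ᵥ A.mulVec v‖} =
    sSup {x : ℝ | ∃ θ : ℝ, 0 ≤ θ ∧ θ < Real.pi ∧
      (∃ c : ℝ, |c| = x ∧ ∃ v : Fin n → ℂ, v ≠ 0 ∧ (H θ).mulVec v = (c : ℂ) • v) ∧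
      (∀ c : ℝ, (∃ v : Fin n → ℂ, v ≠ 0 ∧ (H θ).mulVec v = (c : ℂ) • v) → |c| ≤ x)} := by
  have hH' (θ : ℝ) : H θ = (2⁻¹ : ℂ) •
      (Complex.exp (θ * Complex.I) • A + (Complex.exp (θ * Complex.I) • A)ᴴ) := by
    rw [hH, conjTranspose_smul, Complex.star_exp_ofReal_mul_I]
  have hquad (θ : ℝ) (v : Fin n → ℂ) : star v ⬝ᵥ H θ *ᵥ v =
      ((Complex.exp (θ * Complex.I) * (star v ⬝ᵥ A *ᵥ v)).re : ℂ) := by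
    rw [hH', star_dotProduct_inv_two_smul_add_conjTranspose_mulVec, smul_mulVec, dotProduct_smul,
      smul_eq_mul]
    rfl
  apply csSup_eq_csSup_of_forall_exists_le
  · rintro _ ⟨v, hv, rfl⟩
    have : Nonempty (Fin n) := not_isEmpty_iff.1 fun _ ↦ by simp [dotProduct] at hv
    obtain ⟨θ, ⟨hθ₀, hθπ⟩, hθ⟩ := Complex.exists_abs_re_exp_mul_eq_norm (star v ⬝ᵥ A *ᵥ v)
    have hHθ : (H θ).IsHermitian := hH' θ ▸ isHermitian_inv_two_smul_add_conjTranspose _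
    refine ⟨‖H θ‖, ⟨θ, hθ₀, hθπ, hHθ.exists_eigenvalue_abs_eq_l2_opNorm, ?_⟩, ?_⟩
    · rintro c ⟨w, hw, hcw⟩
      simpa using norm_le_l2_opNorm_of_mulVec_eq_smul hw hcw
    · calc ‖star v ⬝ᵥ A *ᵥ v‖ = ‖star v ⬝ᵥ H θ *ᵥ v‖ := by
            rw [hquad, Complex.norm_real, Real.norm_eq_abs, hθ]
        _ ≤ ‖H θ‖ := by simpa [hv] using norm_star_dotProduct_mulVec_le (H θ) v
  · rintro _ ⟨θ, -, -, ⟨c, rfl, v, hv, hcv⟩, -⟩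
    obtain ⟨t, ht⟩ := exists_smul_star_dotProduct_self_eq_one hv
    refine ⟨_, ⟨t • v, ht, rfl⟩, ?_⟩
    have hc : (c : ℂ) = star (t • v) ⬝ᵥ H θ *ᵥ (t • v) := by
      rw [mulVec_smul, hcv, smul_comm, dotProduct_smul, ht, smul_eq_mul, mul_one]
    rw [hquad, Complex.ofReal_inj] at hc
    calc |c| ≤ ‖Complex.exp (θ * Complex.I) * (star (t • v) ⬝ᵥ A *ᵥ (t • v))‖ :=
          hc ▸ Complex.abs_re_le_norm _
      _ = _ := by rw [norm_mul, Complex.norm_exp_ofReal_mul_I, one_mul]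
end

section
/- Let A be an n×n complex matrix with numerical radius r(A) = sup{ |x*Ax| : x ∈ ℂⁿ, ‖x‖ = 1 }. Then for every natural number k, ‖A^k‖ ≤ 2·(r(A))^k, where ‖·‖ denotes the spectral norm (the operator norm induced by the Euclidean vector norm). -/
/-!
Polarization gives `‖B‖ ≤ 2 r(B)`, so it suffices to prove Berger's power inequality
`r(T ^ k) ≤ r(T) ^ k`. Scaling `T` by `c⁻¹` for every `c > r(T)` reduces it to `r(T) ≤ 1`, and
`r(S) ≤ 1` holds as soon as `1 - u S` is accretive (`Re ⟪(1 - u S) x, x⟫ ≥ 0`) for all `|u| < 1`.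
Write `u = z ^ k` and let `ω` be a primitive `k`-th root of unity. Each factor `1 - ωʲ z T` is
invertible with accretive inverse, and the partial fraction identity
`k / (1 - λᵏ) = ∑ⱼ 1 / (1 - ωʲ λ)` becomes `k (1 - u T ^ k)⁻¹ = ∑ⱼ (1 - ωʲ z T)⁻¹`. So
`(1 - u T ^ k)⁻¹` is accretive, and accretivity passes to the inverse `1 - u T ^ k`.
-/

open scoped InnerProductSpace

theorem IsPrimitiveRoot.sum_geom_sum_smul_pow {K R : Type*} [Field K] [Ring R] [Algebra K R]
    {ζ : K} {k : ℕ} (hζ : IsPrimitiveRoot ζ k) (a : R) :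
    ∑ j ∈ Finset.range k, ∑ m ∈ Finset.range k, (ζ ^ j • a) ^ m = k := by
  have hζm : ∀ m ∈ Finset.range k,
      ∑ j ∈ Finset.range k, (ζ ^ m) ^ j = if m = 0 then (k : K) else 0 := by
    intro m hm
    split_ifs with h0
    · simp [h0]
    · rw [geom_sum_eq (hζ.pow_ne_one_of_pos_of_lt h0 (Finset.mem_range.mp hm)), ← pow_mul,
        mul_comm, pow_mul, hζ.pow_eq_one, one_pow, sub_self, zero_div]
  calc ∑ j ∈ Finset.range k, ∑ m ∈ Finset.range k, (ζ ^ j • a) ^ m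
      = ∑ m ∈ Finset.range k, (∑ j ∈ Finset.range k, (ζ ^ m) ^ j) • a ^ m := by
        rw [Finset.sum_comm]
        refine Finset.sum_congr rfl fun m _ ↦ ?_
        simp only [Finset.sum_smul, smul_pow, pow_right_comm ζ m]
    _ = k := by
        rw [Finset.sum_congr rfl fun m hm ↦ by rw [hζm m hm]]
        simp only [ite_smul, zero_smul, Finset.sum_ite_eq', Finset.mem_range, pow_zero]
        split_ifs with hk
        · simp [Nat.cast_smul_eq_nsmul]
        · simp [Nat.eq_zero_of_not_pos hk]

namespace ContinuousLinearMap

variable {E : Type*} [NormedAddCommGroup E] [InnerProductSpace ℂ E]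

noncomputable def numRadius (T : E →L[ℂ] E) : ℝ :=
  sSup ((fun x ↦ ‖⟪T x, x⟫_ℂ‖) '' Metric.sphere 0 1)

def IsAccretive (T : E →L[ℂ] E) : Prop :=
  ∀ x, 0 ≤ RCLike.re ⟪T x, x⟫_ℂ

lemma numRadius_nonneg (T : E →L[ℂ] E) : 0 ≤ T.numRadius :=
  Real.sSup_nonneg <| by rintro _ ⟨x, -, rfl⟩; positivity

lemma numRadius_le {T : E →L[ℂ] E} {c : ℝ} (hc : 0 ≤ c)
    (h : ∀ x, ‖⟪T x, x⟫_ℂ‖ ≤ c * ‖x‖ ^ 2) : T.numRadius ≤ c :=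
  Real.sSup_le (by rintro _ ⟨x, hx, rfl⟩; simpa [mem_sphere_zero_iff_norm.mp hx] using h x) hc

lemma norm_inner_apply_self_le_numRadius_mul (T : E →L[ℂ] E) (x : E) :
    ‖⟪T x, x⟫_ℂ‖ ≤ T.numRadius * ‖x‖ ^ 2 := by
  rcases eq_or_ne x 0 with rfl | hx
  · simp
  have hbdd : BddAbove ((fun x ↦ ‖⟪T x, x⟫_ℂ‖) '' Metric.sphere 0 1) := by
    refine ⟨‖T‖, ?_⟩
    rintro _ ⟨y, hy, rfl⟩
    rw [mem_sphere_zero_iff_norm] at hy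
    simpa [hy] using (norm_inner_le_norm (T y) y).trans
      (mul_le_mul_of_nonneg_right (T.le_opNorm y) (norm_nonneg y))
  have hx' : 0 < ‖x‖ := norm_pos_iff.mpr hx
  set y : E := ((‖x‖⁻¹ : ℝ) : ℂ) • x
  have hy : y ∈ Metric.sphere (0 : E) 1 := by
    simp [y, norm_smul, hx'.ne']
  have := le_csSup hbdd ⟨y, hy, rfl⟩
  simp only [y, map_smul, inner_smul_left, inner_smul_right, norm_mul, Complex.conj_ofReal,
    Complex.norm_real, norm_inv, norm_norm] at this
  rw [numRadius, ← div_le_iff₀ (by positivity)]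
  convert this using 1
  field_simp

theorem norm_le_two_mul_numRadius (T : E →L[ℂ] E) : ‖T‖ ≤ 2 * T.numRadius := by
  refine opNorm_le_of_re_inner_le (mul_nonneg zero_le_two T.numRadius_nonneg) fun x y hx hy ↦ ?_
  have hq := T.norm_inner_apply_self_le_numRadius_mul
  have hxy := parallelogram_law_with_norm ℂ x y
  have hxIy := parallelogram_law_with_norm ℂ x (Complex.I • y)
  rw [norm_smul, Complex.norm_I, one_mul] at hxIy
  set a := ⟪T (x + y), x + y⟫_ℂ
  set b := ⟪T (x - y), x - y⟫_ℂ
  set c := ⟪T (x + Complex.I • y), x + Complex.I • y⟫_ℂ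
  set d := ⟪T (x - Complex.I • y), x - Complex.I • y⟫_ℂ
  have hpol : ⟪T x, y⟫_ℂ = (a - b - Complex.I * c + Complex.I * d) / 4 :=
    inner_map_polarization' (T : E →ₗ[ℂ] E) x y
  have h1 := norm_sub_le a b
  have h2 := norm_sub_le (a - b) (Complex.I * c)
  have h3 := norm_add_le (a - b - Complex.I * c) (Complex.I * d)
  simp only [norm_mul, Complex.norm_I, one_mul] at h2 h3
  calc RCLike.re ⟪T x, y⟫_ℂ ≤ ‖⟪T x, y⟫_ℂ‖ := RCLike.re_le_norm _
    _ ≤ (‖a‖ + ‖b‖ + ‖c‖ + ‖d‖) / 4 := by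
      rw [hpol, norm_div, RCLike.norm_ofNat]
      linarith
    _ ≤ T.numRadius * (‖x + y‖ ^ 2 + ‖x - y‖ ^ 2 + ‖x + Complex.I • y‖ ^ 2
          + ‖x - Complex.I • y‖ ^ 2) / 4 := by
      linarith [hq (x + y), hq (x - y), hq (x + Complex.I • y), hq (x - Complex.I • y)]
    _ = 2 * T.numRadius := by
      rw [hx, hy] at hxy hxIy
      linear_combination (T.numRadius / 4) * (hxy + hxIy)

lemma numRadius_smul_le (c : ℂ) (T : E →L[ℂ] E) : (c • T).numRadius ≤ ‖c‖ * T.numRadius := by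
  refine numRadius_le (mul_nonneg (norm_nonneg c) T.numRadius_nonneg) fun x ↦ ?_
  rw [_root_.smul_apply, inner_smul_left, norm_mul, RCLike.norm_conj, mul_assoc]
  exact mul_le_mul_of_nonneg_left (T.norm_inner_apply_self_le_numRadius_mul x) (norm_nonneg c)

lemma le_re_inner_one_sub_smul_apply_self (T : E →L[ℂ] E) (w : ℂ) (x : E) :
    (1 - ‖w‖ * T.numRadius) * ‖x‖ ^ 2 ≤ RCLike.re ⟪(1 - w • T) x, x⟫_ℂ := by
  have h := T.norm_inner_apply_self_le_numRadius_mul x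
  have hre := RCLike.re_le_norm (starRingEnd ℂ w * ⟪T x, x⟫_ℂ)
  rw [norm_mul, RCLike.norm_conj] at hre
  rw [_root_.sub_apply, one_apply_eq_self, _root_.smul_apply, inner_sub_left, inner_smul_left,
    map_sub, inner_self_eq_norm_sq]
  nlinarith [norm_nonneg w]

lemma isUnit_one_sub_smul [CompleteSpace E] {T : E →L[ℂ] E} {w : ℂ}
    (h : ‖w‖ * T.numRadius < 1) : IsUnit (1 - w • T) :=
  isUnit_of_forall_le_norm_inner_map _ (c := ⟨1 - ‖w‖ * T.numRadius, sub_nonneg.mpr h.le⟩)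
    (NNReal.coe_pos.mp (sub_pos.mpr h)) fun x ↦ by
      rw [mul_comm]
      exact (T.le_re_inner_one_sub_smul_apply_self w x).trans (RCLike.re_le_norm _)

namespace IsAccretive

lemma of_mul_eq_one {M N : E →L[ℂ] E} (hM : M.IsAccretive) (h : M * N = 1) :
    N.IsAccretive := fun x ↦ by
  have hx : M (N x) = x := by simpa using congr($h x)
  simpa [hx, inner_re_symm] using hM (N x)

lemma sum {ι : Type*} (s : Finset ι) {T : ι → E →L[ℂ] E} (h : ∀ i ∈ s, (T i).IsAccretive) :
    (∑ i ∈ s, T i).IsAccretive := fun x ↦ by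
  simpa [_root_.sum_apply, sum_inner] using Finset.sum_nonneg fun i hi ↦ h i hi x

lemma ofReal_smul {T : E →L[ℂ] E} (hT : T.IsAccretive) {r : ℝ} (hr : 0 ≤ r) :
    ((r : ℂ) • T).IsAccretive := fun x ↦ by
  simpa [inner_smul_left] using mul_nonneg hr (hT x)

end IsAccretive

lemma isAccretive_one_sub_smul {T : E →L[ℂ] E} {w : ℂ} (h : ‖w‖ * T.numRadius ≤ 1) :
    (1 - w • T).IsAccretive := fun x ↦
  (mul_nonneg (sub_nonneg.mpr h) (sq_nonneg ‖x‖)).trans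
    (T.le_re_inner_one_sub_smul_apply_self w x)

theorem isAccretive_one_sub_smul_pow [CompleteSpace E] {T : E →L[ℂ] E} (hT : T.numRadius ≤ 1)
    {k : ℕ} (hk : 0 < k) {u : ℂ} (hu : ‖u‖ < 1) : (1 - u • T ^ k).IsAccretive := by
  obtain ⟨z, rfl⟩ := IsAlgClosed.exists_pow_nat_eq u hk
  have hz : ‖z‖ < 1 := by rwa [norm_pow, pow_lt_one_iff_of_nonneg (norm_nonneg z) hk.ne'] at hu
  obtain ⟨ω, hω⟩ : ∃ ω : ℂ, IsPrimitiveRoot ω k := ⟨_, Complex.isPrimitiveRoot_exp k hk.ne'⟩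
  have hw : ∀ j : ℕ, ‖ω ^ j * z‖ * T.numRadius < 1 := fun j ↦ by
    rw [norm_mul, norm_pow, hω.norm'_eq_one hk.ne', one_pow, one_mul]
    nlinarith [T.numRadius_nonneg, norm_nonneg z]
  have hunit : ∀ j : ℕ, IsUnit (1 - (ω ^ j * z) • T) := fun j ↦ isUnit_one_sub_smul (hw j)
  have hfactor : ∀ j : ℕ, (1 - (ω ^ j * z) • T) * ∑ m ∈ Finset.range k, ((ω ^ j * z) • T) ^ m =
      1 - z ^ k • T ^ k := fun j ↦ by
    rw [mul_neg_geom_sum, smul_pow, mul_pow, ← pow_mul, mul_comm j, pow_mul, hω.pow_eq_one,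
      one_pow, one_mul]
  have hsum : (∑ j ∈ Finset.range k, Ring.inverse (1 - (ω ^ j * z) • T)) * (1 - z ^ k • T ^ k) =
      k := by
    rw [Finset.sum_mul]
    calc _ = ∑ j ∈ Finset.range k, ∑ m ∈ Finset.range k, ((ω ^ j * z) • T) ^ m :=
          Finset.sum_congr rfl fun j _ ↦ by
            rw [← hfactor j, Ring.inverse_mul_cancel_left _ _ (hunit j)]
      _ = k := by simpa only [mul_smul] using hω.sum_geom_sum_smul_pow (z • T)
  refine IsAccretive.of_mul_eq_one (M := ((k⁻¹ : ℝ) : ℂ) •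
    ∑ j ∈ Finset.range k, Ring.inverse (1 - (ω ^ j * z) • T)) ?_ ?_
  · refine IsAccretive.ofReal_smul (IsAccretive.sum _ fun j _ ↦ ?_) (by positivity)
    exact (isAccretive_one_sub_smul (hw j).le).of_mul_eq_one (Ring.mul_inverse_cancel _ (hunit j))
  · rw [smul_mul_assoc, hsum, ← map_natCast (algebraMap ℂ (E →L[ℂ] E)),
      Algebra.algebraMap_eq_smul_one, smul_smul]
    norm_num [hk.ne']

lemma numRadius_le_one_of_forall_isAccretive {S : E →L[ℂ] E}
    (h : ∀ u : ℂ, ‖u‖ < 1 → (1 - u • S).IsAccretive) : S.numRadius ≤ 1 := by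
  refine numRadius_le zero_le_one fun x ↦ ?_
  rw [one_mul]
  refine le_of_forall_lt_imp_le_of_dense fun s hs ↦ ?_
  rcases le_or_gt s 0 with hs0 | hs0
  · exact hs0.trans (sq_nonneg _)
  set q := ⟪S x, x⟫_ℂ
  have hq : 0 < ‖q‖ := hs0.trans hs
  -- `u` is aligned with `q`, so accretivity of `1 - u • S` at `x` reads `s ≤ ‖x‖ ^ 2`.
  have hu : ‖((s / ‖q‖ ^ 2 : ℝ) : ℂ) * q‖ < 1 := by
    rw [norm_mul, Complex.norm_real, Real.norm_of_nonneg (by positivity)]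
    field_simp
    exact hs
  have hre : RCLike.re (starRingEnd ℂ (((s / ‖q‖ ^ 2 : ℝ) : ℂ) * q) * q) = s := by
    rw [map_mul (starRingEnd ℂ), Complex.conj_ofReal, mul_assoc, Complex.conj_mul']
    simp only [RCLike.re_to_complex, Complex.re_ofReal_mul]
    norm_cast
    field_simp
  have := h _ hu x
  rw [_root_.sub_apply, one_apply_eq_self, _root_.smul_apply, inner_sub_left, inner_smul_left,
    map_sub, inner_self_eq_norm_sq, hre] at this
  linarith

lemma numRadius_one_le : (1 : E →L[ℂ] E).numRadius ≤ 1 :=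
  numRadius_le zero_le_one fun x ↦ by simp [inner_self_eq_norm_sq_to_K]

theorem numRadius_pow_le_one [CompleteSpace E] {T : E →L[ℂ] E} (hT : T.numRadius ≤ 1) (k : ℕ) :
    (T ^ k).numRadius ≤ 1 := by
  rcases k.eq_zero_or_pos with rfl | hk
  · rw [pow_zero]
    exact numRadius_one_le
  · exact numRadius_le_one_of_forall_isAccretive fun u hu ↦ isAccretive_one_sub_smul_pow hT hk hu

theorem numRadius_pow_le [CompleteSpace E] (T : E →L[ℂ] E) (k : ℕ) :
    (T ^ k).numRadius ≤ T.numRadius ^ k := by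
  have hscaled : ∀ c > T.numRadius, (T ^ k).numRadius ≤ c ^ k := fun c hc ↦ by
    have hc0 : 0 < c := T.numRadius_nonneg.trans_lt hc
    have hT : (((c⁻¹ : ℝ) : ℂ) • T).numRadius ≤ 1 := by
      refine (numRadius_smul_le _ T).trans ?_
      rw [Complex.norm_real, Real.norm_of_nonneg (inv_nonneg.mpr hc0.le), inv_mul_le_iff₀ hc0,
        mul_one]
      exact hc.le
    calc (T ^ k).numRadius = ((c : ℂ) ^ k • (((c⁻¹ : ℝ) : ℂ) • T) ^ k).numRadius := by
          rw [smul_pow, smul_smul, ← mul_pow, Complex.ofReal_inv,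
            mul_inv_cancel₀ (Complex.ofReal_ne_zero.mpr hc0.ne'), one_pow, one_smul]
      _ ≤ ‖(c : ℂ) ^ k‖ * ((((c⁻¹ : ℝ) : ℂ) • T) ^ k).numRadius := numRadius_smul_le _ _
      _ ≤ c ^ k := by
          rw [norm_pow, Complex.norm_real, Real.norm_of_nonneg hc0.le]
          exact mul_le_of_le_one_right (by positivity) (numRadius_pow_le_one hT k)
  exact ge_of_tendsto (((continuous_pow k).tendsto _).mono_left nhdsWithin_le_nhds)
    (eventually_nhdsWithin_of_forall (s := Set.Ioi T.numRadius) hscaled)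

end ContinuousLinearMap

lemma EuclideanSpace.star_dotProduct_ofLp_self {ι : Type*} [Fintype ι] (x : EuclideanSpace ℂ ι) :
    star (WithLp.ofLp x) ⬝ᵥ WithLp.ofLp x = (‖x‖ : ℂ) ^ 2 := by
  rw [dotProduct_comm, ← EuclideanSpace.inner_eq_star_dotProduct, inner_self_eq_norm_sq_to_K]
  rfl

namespace Matrix

variable {ι : Type*} [Fintype ι] [DecidableEq ι]

lemma inner_toEuclideanCLM_self (A : Matrix ι ι ℂ) (x : EuclideanSpace ℂ ι) :
    ⟪x, toEuclideanCLM (𝕜 := ℂ) A x⟫_ℂ = star (WithLp.ofLp x) ⬝ᵥ A *ᵥ WithLp.ofLp x := by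
  rw [EuclideanSpace.inner_eq_star_dotProduct, ofLp_toEuclideanCLM, dotProduct_comm]

lemma numRadius_toEuclideanCLM (A : Matrix ι ι ℂ) :
    (toEuclideanCLM (𝕜 := ℂ) A).numRadius =
      sSup {r : ℝ | ∃ v : ι → ℂ, star v ⬝ᵥ v = 1 ∧ r = ‖star v ⬝ᵥ A *ᵥ v‖} := by
  rw [ContinuousLinearMap.numRadius]
  congr 1
  ext r
  simp only [Set.mem_image, mem_sphere_zero_iff_norm, Set.mem_ofPred_eq]
  constructor
  · rintro ⟨x, hx, rfl⟩
    refine ⟨WithLp.ofLp x, by rw [EuclideanSpace.star_dotProduct_ofLp_self, hx]; simp, ?_⟩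
    rw [← inner_toEuclideanCLM_self, norm_inner_symm]
  · rintro ⟨v, hv, rfl⟩
    refine ⟨WithLp.toLp 2 v, ?_, ?_⟩
    · have h := EuclideanSpace.star_dotProduct_ofLp_self (WithLp.toLp 2 v)
      rw [WithLp.ofLp_toLp, hv] at h
      exact (pow_eq_one_iff_of_nonneg (norm_nonneg _) two_ne_zero).mp (by exact_mod_cast h.symm)
    · rw [norm_inner_symm, inner_toEuclideanCLM_self]

end Matrix

/-- equation (1.5). For every `k`, `‖A^k‖ ≤ 2·(r(A))^k`, where `‖·‖`
is the spectral norm (the operator norm on Euclidean space) and `r(A)` is the numerical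
radius of `A`. -/
theorem power_bound_numerical_radius (n : ℕ) (A : Matrix (Fin n) (Fin n) ℂ)
    (rA : ℝ)
    (hrA : rA = sSup {x : ℝ | ∃ v : Fin n → ℂ, star v ⬝ᵥ v = 1 ∧
      x = ‖star v ⬝ᵥ A.mulVec v‖})
    (k : ℕ) :
    ‖Matrix.toEuclideanCLM (𝕜 := ℂ) (A ^ k)‖ ≤ 2 * rA ^ k := by
  set T := Matrix.toEuclideanCLM (𝕜 := ℂ) A
  rw [hrA, ← Matrix.numRadius_toEuclideanCLM, map_pow]
  calc ‖T ^ k‖ ≤ 2 * (T ^ k).numRadius := (T ^ k).norm_le_two_mul_numRadius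
    _ ≤ 2 * T.numRadius ^ k := by gcongr; exact T.numRadius_pow_le k
end
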